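/- Let s > 0 and let P satisfy H1 and H2, and suppose P_∞ := lim_{x→∞} P(x) < ∞ (P is bounded). Set γ_∞ = (√(1 + 4·P_∞) − 1)/2. Then there exists a positive solution γ of the Dyson–Schwinger ODE on (0, ∞) which is bounded, indeed satisfying γ_c(x) < γ(x) ≤ γ_∞ for all x > 0; moreover this bounded global positive solution is unique: any two bounded positive solutions on (0, ∞) coincide. -/

import Mathlib

open Real MeasureTheory Filter Set

noncomputable section

/-- `γ` is a positive solution of the Dyson–Schwinger ODE
`γ'(x) = (γ(x) + γ(x)² − P(x)) / (s·x·γ(x))` on the set `I`. -/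
def IsDSSolution (s : ℝ) (P γ : ℝ → ℝ) (I : Set ℝ) : Prop :=
  (∀ x ∈ I, 0 < γ x) ∧
    ∀ x ∈ I, HasDerivWithinAt γ ((γ x + (γ x) ^ 2 - P x) / (s * x * γ x)) I x

/-- Hypothesis H1: `P` is twice continuously differentiable on `[0,∞)`,
`P 0 = 0`, and `P x > 0` for `x > 0`. -/
def H1 (P : ℝ → ℝ) : Prop :=
  ContDiffOn ℝ 2 P (Set.Ici 0) ∧ P 0 = 0 ∧ ∀ x > (0 : ℝ), 0 < P x

/-- Hypothesis H2: `P` is strictly increasing on `[0,∞)`. -/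
def H2 (P : ℝ → ℝ) : Prop := StrictMonoOn P (Set.Ici 0)

/-- The nullcline `γ_c(x) = (√(1 + 4 P x) − 1)/2`. -/
def gammaC (P : ℝ → ℝ) (x : ℝ) : ℝ := (Real.sqrt (1 + 4 * P x) - 1) / 2

/-!
For two positive solutions, `(γ₁ - γ₂)² · x ^ (-2/s)` is nondecreasing. Uniqueness among bounded
solutions follows at once (a nonzero difference would grow like `x ^ (2/s)`), and solutions approach
each other backwards in `x`.

For existence, solve backwards from the nullcline point `(n + 1, γ_c(n + 1))`; the strip
`γ_c ≤ γ ≤ γ_∞` is invariant backwards, since the field vanishes on `γ_c`, which increases, and is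
nonnegative on `γ_∞`. By the backward contraction, `|G_m - G_n| ≤ γ_∞ - γ_c(n + 1)` on
`(0, n + 1]` for `m ≥ n`, so the `G_n` converge. The limit agrees near each point with the solution
through a point to its right, hence is a solution, and a Grönwall argument keeps it strictly above
the nullcline.
-/

open Topology

def addSqRoot (p : ℝ) : ℝ := (Real.sqrt (1 + 4 * p) - 1) / 2

def dsField (s : ℝ) (P : ℝ → ℝ) (x y : ℝ) : ℝ := (y + y ^ 2 - P x) / (s * x * y)

theorem gammaC_eq_addSqRoot (P : ℝ → ℝ) (x : ℝ) : gammaC P x = addSqRoot (P x) := rfl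

section AddSqRoot

variable {p y : ℝ}

theorem addSqRoot_le_iff (hy : 0 ≤ y) : addSqRoot p ≤ y ↔ p ≤ y + y ^ 2 := by
  rw [addSqRoot, div_le_iff₀ two_pos, sub_le_iff_le_add, Real.sqrt_le_left (by positivity)]
  constructor <;> intro h <;> nlinarith

theorem le_addSqRoot_iff (hy : 0 ≤ y) : y ≤ addSqRoot p ↔ y + y ^ 2 ≤ p := by
  rw [addSqRoot, le_div_iff₀ two_pos, le_sub_iff_add_le, Real.le_sqrt' (by positivity)]
  constructor <;> intro h <;> nlinarith

theorem addSqRoot_pos (hp : 0 < p) : 0 < addSqRoot p := by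
  simpa using (addSqRoot_le_iff (p := p) le_rfl).not.2 (by simpa using hp.not_ge)

theorem monotone_addSqRoot : Monotone addSqRoot := fun p q hpq => by
  unfold addSqRoot; gcongr

theorem continuous_addSqRoot : Continuous addSqRoot := by
  unfold addSqRoot; fun_prop

end AddSqRoot

section Field

variable {s : ℝ} {P : ℝ → ℝ} {x y z : ℝ}

theorem dsField_nonpos_iff (hs : 0 < s) (hx : 0 < x) (hy : 0 < y) :
    dsField s P x y ≤ 0 ↔ y ≤ gammaC P x := by
  rw [dsField, div_le_iff₀ (by positivity), zero_mul, sub_nonpos, gammaC_eq_addSqRoot,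
    le_addSqRoot_iff hy.le]

theorem dsField_nonneg_iff (hs : 0 < s) (hx : 0 < x) (hy : 0 < y) :
    0 ≤ dsField s P x y ↔ gammaC P x ≤ y := by
  rw [dsField, le_div_iff₀ (by positivity), zero_mul, sub_nonneg, gammaC_eq_addSqRoot,
    addSqRoot_le_iff hy.le]

theorem dsField_sub (hs : s ≠ 0) (hx : x ≠ 0) (hy : y ≠ 0) (hz : z ≠ 0) :
    dsField s P x y - dsField s P x z = (y - z) * ((1 + P x / (y * z)) / (s * x)) := by
  unfold dsField
  field_simp
  ring

theorem abs_dsField_sub_le {a m Q : ℝ} (hs : 0 < s) (ha : 0 < a) (hax : a ≤ x) (hm : 0 < m)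
    (hy : m ≤ y) (hz : m ≤ z) (hPx : 0 ≤ P x) (hPQ : P x ≤ Q) :
    |dsField s P x y - dsField s P x z| ≤ (1 + Q / (m * m)) / (s * a) * |y - z| := by
  have hy0 := hm.trans_le hy
  have hz0 := hm.trans_le hz
  have hQ := hPx.trans hPQ
  have hx0 := ha.trans_le hax
  have hPyz : 0 ≤ P x / (y * z) := div_nonneg hPx (by positivity)
  rw [dsField_sub hs.ne' hx0.ne' hy0.ne' hz0.ne', abs_mul, mul_comm,
    abs_of_nonneg (by positivity)]
  gcongr

theorem abs_dsField_le {a m M Q : ℝ} (hs : 0 < s) (ha : 0 < a) (hax : a ≤ x) (hm : 0 < m)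
    (hy : y ∈ Icc m M) (hPx : 0 ≤ P x) (hPQ : P x ≤ Q) :
    |dsField s P x y| ≤ (M + M ^ 2 + Q) / (s * a * m) := by
  have hy0 := hm.trans_le hy.1
  have hx0 := ha.trans_le hax
  rw [dsField, abs_div, abs_of_pos (by positivity : 0 < s * x * y)]
  apply div_le_div₀ (by nlinarith [hy.2]) _ (by positivity)
    (mul_le_mul (by gcongr) hy.1 hm.le (by positivity))
  rw [abs_le]
  constructor <;> nlinarith [hy.2]

end Field

namespace IsDSSolution

variable {s : ℝ} {P γ γ₁ γ₂ : ℝ → ℝ} {I J : Set ℝ}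

theorem mono (h : IsDSSolution s P γ I) (hJI : J ⊆ I) : IsDSSolution s P γ J :=
  ⟨fun x hx => h.1 x (hJI hx), fun x hx => (h.2 x (hJI hx)).mono hJI⟩

theorem continuousOn (h : IsDSSolution s P γ I) : ContinuousOn γ I :=
  fun x hx => (h.2 x hx).continuousWithinAt

/-- The weight `x ^ (-(2 / s))` exactly absorbs the part `2 (γ₁ - γ₂)² / (s x)` of the derivative
of `(γ₁ - γ₂)²`; what is left is a nonnegative multiple of `P`. -/
theorem monotoneOn_sq_sub_mul_rpow (h₁ : IsDSSolution s P γ₁ I) (h₂ : IsDSSolution s P γ₂ I)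
    (hs : 0 < s) (hI : Convex ℝ I) (hI0 : I ⊆ Ioi 0) (hP : ∀ x ∈ I, 0 ≤ P x) :
    MonotoneOn (fun x => (γ₁ x - γ₂ x) ^ 2 * x ^ (-(2 / s))) I := by
  have hderiv : ∀ x ∈ I, HasDerivWithinAt (fun x => (γ₁ x - γ₂ x) ^ 2 * x ^ (-(2 / s)))
      (2 * (γ₁ x - γ₂ x) ^ 2 * P x * x ^ (-(2 / s)) / (s * x * γ₁ x * γ₂ x)) I x := by
    intro x hx
    have hx0 : 0 < x := hI0 hx
    have hγ₁ := h₁.1 x hx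
    have hγ₂ := h₂.1 x hx
    refine ((((h₁.2 x hx).sub (h₂.2 x hx)).pow 2).mul
      (Real.hasDerivAt_rpow_const (p := -(2 / s)) (Or.inl hx0.ne')).hasDerivWithinAt).congr_deriv ?_
    rw [Real.rpow_sub_one hx0.ne']
    simp only [Pi.sub_apply, Pi.pow_apply]
    field_simp
    ring
  refine monotoneOn_of_hasDerivWithinAt_nonneg hI (fun x hx => (hderiv x hx).continuousWithinAt)
    (fun x hx => (hderiv x (interior_subset hx)).mono interior_subset) fun x hx => ?_
  have hx := interior_subset hx
  have hx0 : 0 < x := hI0 hx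
  have hγ₁ := h₁.1 x hx
  have hγ₂ := h₂.1 x hx
  have hPx := hP x hx
  positivity

theorem abs_sub_le_abs_sub (h₁ : IsDSSolution s P γ₁ I) (h₂ : IsDSSolution s P γ₂ I)
    (hs : 0 < s) (hI : Convex ℝ I) (hI0 : I ⊆ Ioi 0) (hP : ∀ x ∈ I, 0 ≤ P x) {x y : ℝ}
    (hx : x ∈ I) (hy : y ∈ I) (hxy : x ≤ y) : |γ₁ x - γ₂ x| ≤ |γ₁ y - γ₂ y| := by
  have hx0 : 0 < x := hI0 hx
  have hw : y ^ (-(2 / s)) ≤ x ^ (-(2 / s)) :=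
    Real.rpow_le_rpow_of_nonpos hx0 hxy (neg_nonpos.2 (by positivity))
  rw [← sq_le_sq]
  refine le_of_mul_le_mul_right ?_ (Real.rpow_pos_of_pos hx0 (-(2 / s)))
  calc (γ₁ x - γ₂ x) ^ 2 * x ^ (-(2 / s)) ≤ (γ₁ y - γ₂ y) ^ 2 * y ^ (-(2 / s)) :=
        h₁.monotoneOn_sq_sub_mul_rpow h₂ hs hI hI0 hP hx hy hxy
    _ ≤ (γ₁ y - γ₂ y) ^ 2 * x ^ (-(2 / s)) := by gcongr

end IsDSSolution

theorem eqOn_of_isDSSolution_Ioi {s : ℝ} {P γ₁ γ₂ : ℝ → ℝ} (hs : 0 < s)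
    (hP : ∀ x > 0, 0 ≤ P x) (h₁ : IsDSSolution s P γ₁ (Ioi 0)) (hb₁ : ∃ M, ∀ x > 0, γ₁ x ≤ M)
    (h₂ : IsDSSolution s P γ₂ (Ioi 0)) (hb₂ : ∃ M, ∀ x > 0, γ₂ x ≤ M) :
    EqOn γ₁ γ₂ (Ioi 0) := by
  intro x₀ hx₀
  by_contra hne
  obtain ⟨M₁, hM₁⟩ := hb₁
  obtain ⟨M₂, hM₂⟩ := hb₂
  have hmono := h₁.monotoneOn_sq_sub_mul_rpow h₂ hs (convex_Ioi 0) subset_rfl hP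
  have hbound : ∀ x > 0, (γ₁ x - γ₂ x) ^ 2 ≤ (M₁ + M₂) ^ 2 := fun x hx => by
    have := h₁.1 x hx
    have := h₂.1 x hx
    have := hM₁ x hx
    have := hM₂ x hx
    exact sq_le_sq' (by linarith) (by linarith)
  have hdecay : Tendsto (fun x => (M₁ + M₂) ^ 2 * x ^ (-(2 / s))) atTop (𝓝 0) := by
    simpa using (tendsto_rpow_neg_atTop (by positivity)).const_mul ((M₁ + M₂) ^ 2)
  have hle : (γ₁ x₀ - γ₂ x₀) ^ 2 * x₀ ^ (-(2 / s)) ≤ 0 := by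
    refine ge_of_tendsto hdecay ?_
    filter_upwards [eventually_ge_atTop x₀] with x hx
    have hx0 : (0 : ℝ) < x := lt_of_lt_of_le hx₀ hx
    exact (hmono hx₀ hx0 hx).trans
      (mul_le_mul_of_nonneg_right (hbound x hx0) (Real.rpow_nonneg hx0.le _))
  have hsub : γ₁ x₀ - γ₂ x₀ ≠ 0 := sub_ne_zero.2 hne
  have hx₀' : (0 : ℝ) < x₀ := hx₀
  have : 0 < (γ₁ x₀ - γ₂ x₀) ^ 2 * x₀ ^ (-(2 / s)) := by positivity
  linarith

theorem exists_forall_hasDerivWithinAt_Icc_of_lipschitzWith {E : Type*} [NormedAddCommGroup E]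
    [NormedSpace ℝ E] [CompleteSpace E] {F : ℝ → E → E} {a b t₀ : ℝ} (ht₀ : t₀ ∈ Icc a b)
    (y₀ : E) {K C : NNReal} (hlip : ∀ t ∈ Icc a b, LipschitzWith K (F t))
    (hcont : ∀ y, ContinuousOn (F · y) (Icc a b)) (hbound : ∀ t ∈ Icc a b, ∀ y, ‖F t y‖ ≤ C) :
    ∃ f : ℝ → E, f t₀ = y₀ ∧ ∀ t ∈ Icc a b, HasDerivWithinAt f (F t (f t)) (Icc a b) t := by
  have hpl : IsPicardLindelof F (t₀ := ⟨t₀, ht₀⟩) y₀ (C * (b - a).toNNReal) 0 C K :=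
    { lipschitzOnWith := fun t ht => (hlip t ht).lipschitzOnWith
      continuousOn := fun y _ => hcont y
      norm_le := fun t ht y _ => hbound t ht y
      mul_max_le := by
        rw [NNReal.coe_mul, Real.coe_toNNReal _ (sub_nonneg.2 (ht₀.1.trans ht₀.2)),
          NNReal.coe_zero, sub_zero]
        gcongr
        exact max_le (by linarith [ht₀.1]) (by linarith [ht₀.2]) }
  exact hpl.exists_eq_forall_mem_Icc_hasDerivWithinAt₀

theorem le_of_deriv_nonpos_of_lt_monotoneOn {f f' B : ℝ → ℝ} {a b : ℝ}
    (hf : ContinuousOn f (Icc a b)) (hf' : ∀ x ∈ Ioo a b, HasDerivAt f (f' x) x)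
    (hB : ContinuousOn B (Icc a b)) (hBm : MonotoneOn B (Icc a b)) (hb : B b ≤ f b)
    (hneg : ∀ x ∈ Ioo a b, f x < B x → f' x ≤ 0) : ∀ x ∈ Icc a b, B x ≤ f x := by
  intro x₁ hx₁
  by_contra! hlt
  have hsub : Icc x₁ b ⊆ Icc a b := Icc_subset_Icc_left hx₁.1
  set T := Icc x₁ b ∩ (fun x => B x - f x) ⁻¹' Iic 0
  have hT : IsClosed T :=
    ((hB.sub hf).mono hsub).preimage_isClosed_of_isClosed isClosed_Icc isClosed_Iic
  have hTbdd : BddBelow T := ⟨x₁, fun y hy => hy.1.1⟩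
  have hx₂ : sInf T ∈ T :=
    hT.csInf_mem ⟨b, ⟨hx₁.2, le_rfl⟩, sub_nonpos.2 hb⟩ hTbdd
  set x₂ := sInf T
  have hx₁₂ : x₁ ≤ x₂ := hx₂.1.1
  have hsub₂ : Icc x₁ x₂ ⊆ Icc a b := (Icc_subset_Icc_right hx₂.1.2).trans hsub
  have hbelow : ∀ x ∈ Ico x₁ x₂, f x < B x := fun x hx => by
    by_contra! h
    exact (csInf_le hTbdd ⟨⟨hx.1, hx.2.le.trans hx₂.1.2⟩, sub_nonpos.2 h⟩).not_gt hx.2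
  have hanti : AntitoneOn f (Icc x₁ x₂) := by
    refine antitoneOn_of_hasDerivWithinAt_nonpos (f' := f') (convex_Icc _ _) (hf.mono hsub₂) ?_ ?_
    · rw [interior_Icc]
      exact fun x hx => (hf' x (Ioo_subset_Ioo hx₁.1 hx₂.1.2 hx)).hasDerivWithinAt
    · rw [interior_Icc]
      exact fun x hx => hneg x (Ioo_subset_Ioo hx₁.1 hx₂.1.2 hx) (hbelow x (Ioo_subset_Ico_self hx))
  have := hanti ⟨le_rfl, hx₁₂⟩ ⟨hx₁₂, le_rfl⟩ hx₁₂
  have := hBm hx₁ (hsub₂ ⟨hx₁₂, le_rfl⟩) hx₁₂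
  have : B x₂ - f x₂ ≤ 0 := hx₂.2
  linarith

section Strip

variable {s : ℝ} {P : ℝ → ℝ}

/-- Clamping the field to the strip `[m, M]` makes it globally Lipschitz and bounded. -/
theorem exists_hasDerivWithinAt_dsField_projIcc (hs : 0 < s) {ε b m M Q : ℝ} (y₀ : ℝ)
    (hε : 0 < ε) (hεb : ε ≤ b) (hm : 0 < m) (hmM : m ≤ M) (hPc : ContinuousOn P (Icc ε b))
    (hP : ∀ x ∈ Icc ε b, 0 ≤ P x ∧ P x ≤ Q) :
    ∃ f : ℝ → ℝ, f b = y₀ ∧ ∀ t ∈ Icc ε b,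
      HasDerivWithinAt f (dsField s P t (projIcc m M hmM (f t))) (Icc ε b) t := by
  have hQ : 0 ≤ Q := (hP b ⟨hεb, le_rfl⟩).1.trans (hP b ⟨hεb, le_rfl⟩).2
  have hM : 0 < M := hm.trans_le hmM
  refine exists_forall_hasDerivWithinAt_Icc_of_lipschitzWith
    (F := fun t y => dsField s P t (projIcc m M hmM y)) ⟨hεb, le_rfl⟩ y₀
    (K := ((1 + Q / (m * m)) / (s * ε)).toNNReal) (C := ((M + M ^ 2 + Q) / (s * ε * m)).toNNReal)
    (fun t ht => LipschitzWith.of_dist_le_mul fun y z => ?_) (fun y => ?_) (fun t ht y => ?_)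
  · rw [Real.dist_eq, Real.dist_eq, Real.coe_toNNReal _ (by positivity)]
    exact (abs_dsField_sub_le hs hε ht.1 hm (projIcc m M hmM y).2.1 (projIcc m M hmM z).2.1
      (hP t ht).1 (hP t ht).2).trans
      (mul_le_mul_of_nonneg_left (abs_projIcc_sub_projIcc hmM) (by positivity))
  · have hy : 0 < (projIcc m M hmM y : ℝ) := hm.trans_le (projIcc m M hmM y).2.1
    refine ContinuousOn.div (by fun_prop) (by fun_prop) fun t ht => ?_
    have := hε.trans_le ht.1
    positivity
  · rw [Real.norm_eq_abs, Real.coe_toNNReal _ (by positivity)]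
    exact abs_dsField_le hs hε ht.1 hm (projIcc m M hmM y).2 (hP t ht).1 (hP t ht).2

theorem exists_isDSSolution_Icc (hs : 0 < s) {ε b M y₀ : ℝ} (hε : 0 < ε) (hεb : ε ≤ b)
    (hPc : ContinuousOn P (Icc ε b)) (hPm : MonotoneOn P (Icc ε b)) (hPε : 0 < P ε)
    (hy₀ : y₀ ∈ Icc (gammaC P b) M) :
    ∃ f, f b = y₀ ∧ IsDSSolution s P f (Icc ε b) ∧
      ∀ x ∈ Icc ε b, gammaC P x ≤ f x ∧ f x ≤ M := by
  have hεI : ε ∈ Icc ε b := ⟨le_rfl, hεb⟩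
  have hbI : b ∈ Icc ε b := ⟨hεb, le_rfl⟩
  have hx0 : ∀ x ∈ Icc ε b, 0 < x := fun x hx => hε.trans_le hx.1
  have hγm : MonotoneOn (gammaC P) (Icc ε b) := monotone_addSqRoot.comp_monotoneOn hPm
  have hγM : ∀ x ∈ Icc ε b, gammaC P x ≤ M :=
    fun x hx => (hγm hx hbI hx.2).trans (hy₀.1.trans hy₀.2)
  set m := gammaC P ε
  have hm : 0 < m := addSqRoot_pos hPε
  have hmM : m ≤ M := hγM ε hεI
  obtain ⟨f, hfb, hf⟩ := exists_hasDerivWithinAt_dsField_projIcc hs y₀ hε hεb hm hmM hPc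
    fun x hx => ⟨hPε.le.trans (hPm hεI hx hx.1), hPm hx hbI hx.2⟩
  have hfc : ContinuousOn f (Icc ε b) := fun x hx => (hf x hx).continuousWithinAt
  have hf' : ∀ x ∈ Ioo ε b, HasDerivAt f (dsField s P x (projIcc m M hmM (f x))) x :=
    fun x hx => (hf x (Ioo_subset_Icc_self hx)).hasDerivAt (Icc_mem_nhds hx.1 hx.2)
  have hlow : ∀ x ∈ Icc ε b, gammaC P x ≤ f x := by
    refine le_of_deriv_nonpos_of_lt_monotoneOn hfc hf'
      (continuous_addSqRoot.comp_continuousOn hPc) hγm (hfb ▸ hy₀.1) fun x hx hlt => ?_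
    have hx' := Ioo_subset_Icc_self hx
    refine (dsField_nonpos_iff hs (hx0 x hx') (hm.trans_le (projIcc m M hmM _).2.1)).2 ?_
    rw [coe_projIcc]
    exact max_le (hγm hεI hx' hx'.1) ((min_le_right _ _).trans hlt.le)
  have hup : ∀ x ∈ Icc ε b, f x ≤ M := by
    have := le_of_deriv_nonpos_of_lt_monotoneOn (B := fun _ => -M) hfc.neg
      (fun x hx => (hf' x hx).neg) continuousOn_const monotoneOn_const (by simp [hfb, hy₀.2])
      fun x hx hlt => ?_
    · exact fun x hx => neg_le_neg_iff.1 (this x hx)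
    have hx' := Ioo_subset_Icc_self hx
    rw [neg_nonpos, projIcc_of_right_le hmM (neg_lt_neg_iff.1 hlt).le]
    exact (dsField_nonneg_iff hs (hx0 x hx') (hm.trans_le hmM)).2 (hγM x hx')
  have hproj : ∀ x ∈ Icc ε b, (projIcc m M hmM (f x) : ℝ) = f x := fun x hx => by
    rw [projIcc_of_mem hmM ⟨(hγm hεI hx hx.1).trans (hlow x hx), hup x hx⟩]
  refine ⟨f, hfb, ⟨fun x hx => hm.trans_le ((hγm hεI hx hx.1).trans (hlow x hx)),
    fun x hx => ?_⟩, fun x hx => ⟨hlow x hx, hup x hx⟩⟩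
  have := hf x hx
  rwa [hproj x hx] at this

end Strip

namespace IsDSSolution

variable {s : ℝ} {P γ : ℝ → ℝ}

/-- At a contact point, `γ - γ_c(a)` obeys a linear differential inequality with zero initial
value, so by Grönwall `γ` would stay equal to `γ_c(a)`, while `γ_c` strictly increases. -/
theorem gammaC_lt {a b : ℝ} (hγ : IsDSSolution s P γ (Icc a b)) (hs : 0 < s) (ha : 0 < a)
    (hab : a ≤ b) (hlow : ∀ x ∈ Icc a b, gammaC P x ≤ γ x) (hPm : MonotoneOn P (Icc a b))
    (hPa : 0 < P a) (hPab : P a < P b) : gammaC P a < γ a := by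
  by_contra! hle
  have haI : a ∈ Icc a b := ⟨le_rfl, hab⟩
  have hbI : b ∈ Icc a b := ⟨hab, le_rfl⟩
  set c := gammaC P a
  have hc : 0 < c := addSqRoot_pos hPa
  have hcγ : ∀ x ∈ Icc a b, c ≤ γ x :=
    fun x hx => (monotone_addSqRoot (hPm haI hx hx.1)).trans (hlow x hx)
  have hγa : γ a = c := le_antisymm hle (hcγ a haI)
  set A := (1 + P b / (c * c)) / (s * a)
  have hderiv : ∀ x ∈ Icc a b,
      0 ≤ dsField s P x (γ x) ∧ dsField s P x (γ x) ≤ A * (γ x - c) := by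
    intro x hx
    have hx0 : 0 < x := ha.trans_le hx.1
    have hPx : 0 ≤ P x := hPa.le.trans (hPm haI hx hx.1)
    have hc_nonpos : dsField s P x c ≤ 0 :=
      (dsField_nonpos_iff hs hx0 hc).2 (monotone_addSqRoot (hPm haI hx hx.1))
    have hlip := abs_dsField_sub_le hs ha hx.1 hc (hcγ x hx) le_rfl hPx (hPm hx hbI hx.2)
    rw [abs_of_nonneg (sub_nonneg.2 (hcγ x hx))] at hlip
    exact ⟨(dsField_nonneg_iff hs hx0 (hc.trans_le (hcγ x hx))).2 (hlow x hx),
      by linarith [le_abs_self (dsField s P x (γ x) - dsField s P x c)]⟩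
  have hzero : ∀ x ∈ Icc a b, ‖γ x - c‖ ≤ 0 := by
    have := norm_le_gronwallBound_of_norm_deriv_right_le (f := fun x => γ x - c)
      (f' := fun x => dsField s P x (γ x)) (δ := 0) (K := A) (ε := 0)
      ((hγ.continuousOn).sub continuousOn_const)
      (fun x hx => ((hγ.2 x (Ico_subset_Icc_self hx)).mono_of_mem_nhdsWithin
        (Icc_mem_nhdsGE_of_mem hx)).sub_const c) (by simp [hγa]) fun x hx => ?_
    · simpa only [gronwallBound_ε0_δ0] using this
    have hx' := Ico_subset_Icc_self hx
    rw [Real.norm_eq_abs, Real.norm_eq_abs, abs_of_nonneg (hderiv x hx').1,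
      abs_of_nonneg (sub_nonneg.2 (hcγ x hx')), add_zero]
    exact (hderiv x hx').2
  have hγb : γ b = c := by simpa [sub_eq_zero] using hzero b hbI
  have h₁ := (addSqRoot_le_iff hc.le).1 (hγb ▸ hlow b hbI)
  have h₂ := (le_addSqRoot_iff hc.le).1 le_rfl
  linarith

end IsDSSolution

theorem eventually_Icc_subset_Icc_inv_add_one {a b : ℝ} (ha : 0 < a) :
    ∀ᶠ n : ℕ in atTop, Icc a b ⊆ Icc ((n : ℝ) + 1)⁻¹ (n + 1) := by
  have hN : Tendsto (fun n : ℕ => (n : ℝ) + 1) atTop atTop :=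
    tendsto_natCast_atTop_atTop.atTop_add tendsto_const_nhds
  filter_upwards [(tendsto_inv_atTop_zero.comp hN).eventually_lt_const ha,
    hN.eventually_ge_atTop b] with n h₁ h₂
  exact Icc_subset_Icc h₁.le h₂

section Limit

variable {s : ℝ} {P : ℝ → ℝ}

theorem eqOn_of_tendsto_isDSSolution (hs : 0 < s) {a b : ℝ} (ha : 0 < a)
    (hP : ∀ x ∈ Icc a b, 0 ≤ P x) {G : ℕ → ℝ → ℝ} {Γ h : ℝ → ℝ}
    (hG : ∀ᶠ n in atTop, IsDSSolution s P (G n) (Icc a b)) (hh : IsDSSolution s P h (Icc a b))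
    (hGΓ : ∀ x ∈ Icc a b, Tendsto (G · x) atTop (𝓝 (Γ x))) (hb : h b = Γ b) :
    EqOn Γ h (Icc a b) := by
  intro x hx
  have hbI : b ∈ Icc a b := ⟨hx.1.trans hx.2, le_rfl⟩
  refine tendsto_nhds_unique (hGΓ x hx) (tendsto_iff_norm_sub_tendsto_zero.2 ?_)
  have hGb : Tendsto (fun n => ‖G n b - h b‖) atTop (𝓝 0) := by
    simpa [hb] using ((hGΓ b hbI).sub_const (h b)).norm
  refine squeeze_zero' (.of_forall fun _ => norm_nonneg _) (hG.mono fun n hn => ?_) hGb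
  simpa only [Real.norm_eq_abs] using hn.abs_sub_le_abs_sub hh hs (convex_Icc a b)
    (fun y hy => ha.trans_le hy.1) hP hx hbI hx.2

theorem cauchySeq_of_isDSSolution (hs : 0 < s) (hP : ∀ x > 0, 0 ≤ P x) {M : ℝ}
    (hM : Tendsto (fun n : ℕ => gammaC P (n + 1)) atTop (𝓝 M)) {G : ℕ → ℝ → ℝ}
    (hG : ∀ n : ℕ, IsDSSolution s P (G n) (Icc ((n : ℝ) + 1)⁻¹ (n + 1)))
    (hGb : ∀ n : ℕ, G n (n + 1) = gammaC P (n + 1))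
    (hGM : ∀ n : ℕ, ∀ x ∈ Icc ((n : ℝ) + 1)⁻¹ (n + 1), gammaC P x ≤ G n x ∧ G n x ≤ M)
    {x : ℝ} (hx : 0 < x) : CauchySeq (G · x) := by
  rw [Metric.cauchySeq_iff']
  intro δ hδ
  obtain ⟨N, hxN, hMN⟩ := ((eventually_Icc_subset_Icc_inv_add_one (b := x) hx).and
    (hM.eventually_const_lt (by linarith : M - δ < M))).exists
  obtain ⟨hxN, hNx⟩ := hxN ⟨le_rfl, le_rfl⟩
  refine ⟨N, fun n hn => ?_⟩
  have hNn : (N : ℝ) + 1 ≤ n + 1 := by gcongr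
  have hNI : (N : ℝ) + 1 ∈ Icc ((n : ℝ) + 1)⁻¹ (n + 1) :=
    ⟨(inv_anti₀ (by positivity) hNn).trans (hxN.trans hNx), hNn⟩
  have hsub : Icc x (N + 1) ⊆ Icc ((n : ℝ) + 1)⁻¹ (n + 1) :=
    Icc_subset_Icc ((inv_anti₀ (by positivity) hNn).trans hxN) hNn
  have hIpos : Icc x (N + 1) ⊆ Ioi 0 := fun y hy => hx.trans_le hy.1
  rw [Real.dist_eq]
  calc |G n x - G N x| ≤ |G n (N + 1) - G N (N + 1)| :=
        ((hG n).mono hsub).abs_sub_le_abs_sub ((hG N).mono (Icc_subset_Icc_left hxN)) hs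
          (convex_Icc _ _) hIpos (fun y hy => hP y (hIpos hy)) ⟨le_rfl, hNx⟩ ⟨hNx, le_rfl⟩ hNx
    _ ≤ M - gammaC P (N + 1) := by
        rw [hGb N, abs_of_nonneg (sub_nonneg.2 (hGM n _ hNI).1)]
        linarith [(hGM n _ hNI).2]
    _ < δ := by linarith

theorem gammaC_le_addSqRoot_of_tendsto {Pinf : ℝ} (hPm : MonotoneOn P (Ioi 0))
    (hlim : Tendsto P atTop (𝓝 Pinf)) {x : ℝ} (hx : 0 < x) : gammaC P x ≤ addSqRoot Pinf :=
  monotone_addSqRoot <| ge_of_tendsto hlim <| by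
    filter_upwards [eventually_ge_atTop x] with y hy using hPm hx (hx.trans_le hy) hy

theorem exists_tendsto_isDSSolution (hs : 0 < s) (hPc : ContinuousOn P (Ioi 0))
    (hPm : MonotoneOn P (Ioi 0)) (hP0 : ∀ x > 0, 0 < P x) {Pinf : ℝ}
    (hlim : Tendsto P atTop (𝓝 Pinf)) :
    ∃ (G : ℕ → ℝ → ℝ) (Γ : ℝ → ℝ),
      (∀ n : ℕ, IsDSSolution s P (G n) (Icc ((n : ℝ) + 1)⁻¹ (n + 1))) ∧
      (∀ x > 0, Tendsto (G · x) atTop (𝓝 (Γ x))) ∧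
      ∀ x > 0, gammaC P x ≤ Γ x ∧ Γ x ≤ addSqRoot Pinf := by
  have hn1 : ∀ n : ℕ, (1 : ℝ) ≤ n + 1 := fun n => by simp
  have hD : ∀ n : ℕ, Icc ((n : ℝ) + 1)⁻¹ (n + 1) ⊆ Ioi 0 :=
    fun n x hx => (inv_pos.2 (zero_lt_one.trans_le (hn1 n))).trans_le hx.1
  choose G hGb hG hGM using fun n : ℕ =>
    exists_isDSSolution_Icc hs (by positivity) ((inv_le_one_of_one_le₀ (hn1 n)).trans (hn1 n))
      (hPc.mono (hD n)) (hPm.mono (hD n)) (hP0 _ (by positivity))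
      ⟨le_rfl, gammaC_le_addSqRoot_of_tendsto hPm hlim (by positivity : (0 : ℝ) < n + 1)⟩
  have hM : Tendsto (fun n : ℕ => gammaC P (n + 1)) atTop (𝓝 (addSqRoot Pinf)) :=
    (continuous_addSqRoot.tendsto Pinf).comp
      (hlim.comp (tendsto_natCast_atTop_atTop.atTop_add tendsto_const_nhds))
  choose! Γ hΓ using fun x (hx : 0 < x) => cauchySeq_tendsto_of_complete
    (cauchySeq_of_isDSSolution hs (fun x hx => (hP0 x hx).le) hM hG hGb hGM hx)
  refine ⟨G, Γ, hG, hΓ, fun x hx => isClosed_Icc.mem_of_tendsto (hΓ x hx) ?_⟩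
  filter_upwards [eventually_Icc_subset_Icc_inv_add_one (b := x) hx] with n hn
  exact hGM n x (hn ⟨le_rfl, le_rfl⟩)

theorem exists_isDSSolution_Ioi (hs : 0 < s) (hPc : ContinuousOn P (Ioi 0))
    (hPm : MonotoneOn P (Ioi 0)) (hP0 : ∀ x > 0, 0 < P x) {Pinf : ℝ}
    (hlim : Tendsto P atTop (𝓝 Pinf)) :
    ∃ Γ, IsDSSolution s P Γ (Ioi 0) ∧ ∀ x > 0, gammaC P x ≤ Γ x ∧ Γ x ≤ addSqRoot Pinf := by
  obtain ⟨G, Γ, hG, hΓ, hΓM⟩ := exists_tendsto_isDSSolution hs hPc hPm hP0 hlim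
  refine ⟨Γ, ⟨fun x hx => (addSqRoot_pos (hP0 x hx)).trans_le (hΓM x hx).1, fun x hx => ?_⟩, hΓM⟩
  have hx0 : 0 < x := hx
  have hxI : x ∈ Icc (x / 2) (x + 1) := ⟨by linarith, by linarith⟩
  have hI : Icc (x / 2) (x + 1) ⊆ Ioi 0 := fun y hy => (half_pos hx0).trans_le hy.1
  obtain ⟨h, hhb, hh, -⟩ := exists_isDSSolution_Icc hs (half_pos hx0) (by linarith)
    (hPc.mono hI) (hPm.mono hI) (hP0 _ (half_pos hx0)) (hΓM (x + 1) (by linarith))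
  have heq : EqOn Γ h (Icc (x / 2) (x + 1)) :=
    eqOn_of_tendsto_isDSSolution hs (half_pos hx0) (fun y hy => (hP0 y (hI hy)).le)
      ((eventually_Icc_subset_Icc_inv_add_one (half_pos hx0)).mono fun n hn => (hG n).mono hn)
      hh (fun y hy => hΓ y (hI hy)) hhb
  have hnhds : Icc (x / 2) (x + 1) ∈ 𝓝 x := Icc_mem_nhds (by linarith) (by linarith)
  rw [heq hxI]
  exact (((hh.2 x hxI).hasDerivAt hnhds).congr_of_eventuallyEq
    (eventuallyEq_of_mem hnhds heq)).hasDerivWithinAt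

end Limit

theorem stmt_15 (s : ℝ) (hs : 0 < s) (P : ℝ → ℝ) (hP1 : H1 P) (hP2 : H2 P)
    (Pinf : ℝ) (hlim : Filter.Tendsto P Filter.atTop (nhds Pinf)) :
    ∃ γ : ℝ → ℝ, IsDSSolution s P γ (Set.Ioi 0) ∧
      (∀ x > (0 : ℝ), gammaC P x < γ x ∧ γ x ≤ (Real.sqrt (1 + 4 * Pinf) - 1) / 2) ∧
      ∀ γ' γ'' : ℝ → ℝ,
        IsDSSolution s P γ' (Set.Ioi 0) → (∃ M : ℝ, ∀ x > (0 : ℝ), γ' x ≤ M) →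
        IsDSSolution s P γ'' (Set.Ioi 0) → (∃ M : ℝ, ∀ x > (0 : ℝ), γ'' x ≤ M) →
        Set.EqOn γ' γ'' (Set.Ioi 0) := by
  have hPc : ContinuousOn P (Ioi 0) := hP1.1.continuousOn.mono Ioi_subset_Ici_self
  have hPm : StrictMonoOn P (Ioi 0) := hP2.mono Ioi_subset_Ici_self
  obtain ⟨Γ, hΓ, hΓM⟩ := exists_isDSSolution_Ioi hs hPc hPm.monotoneOn hP1.2.2 hlim
  refine ⟨Γ, hΓ, fun x hx => ⟨?_, (hΓM x hx).2⟩, fun γ₁ γ₂ h₁ hb₁ h₂ hb₂ =>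
    eqOn_of_isDSSolution_Ioi hs (fun x hx => (hP1.2.2 x hx).le) h₁ hb₁ h₂ hb₂⟩
  have hsub : Icc x (x + 1) ⊆ Ioi 0 := fun y hy => hx.trans_le hy.1
  exact (hΓ.mono hsub).gammaC_lt hs hx (by linarith) (fun y hy => (hΓM y (hsub hy)).1)
    (hPm.monotoneOn.mono hsub) (hP1.2.2 x hx)
    (hPm hx (hsub ⟨by linarith, le_rfl⟩) (by linarith))
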